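/- Under the joint multivariate normal model for (X̃, Z), the AUC_I of the linear combination Y = lᵀX̃, namely AUC_I(l) = ∫ P(lᵀX̃₁ > lᵀX̃₂ | Z₁ > t, Z₂ ≤ t) f_c(t) dt, depends on l only through the correlation ρ(l) = lᵀCov(X̃,Z)/(√(lᵀΣl)σ₂), and is a nondecreasing function of ρ(l). Therefore l_opt = Σ⁻¹Cov(X̃,Z) maximizes AUC_I(l). -/

import Mathlib

open MeasureTheory ProbabilityTheory Set Matrix

/-- The standard normal cumulative distribution function `Φ`. -/
noncomputable def stdNormalCDF (x : ℝ) : ℝ :=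
  ((gaussianReal 0 1) (Iic x)).toReal

/-- `ρ(l) = lᵀCov(X̃,Z)/(σ₂√(lᵀΣl))`, the correlation of `lᵀX̃` with `Z`. -/
noncomputable def rhoLin {p : ℕ} (S : Matrix (Fin p) (Fin p) ℝ) (b : Fin p → ℝ)
    (σ₂ : ℝ) (l : Fin p → ℝ) : ℝ :=
  (l ⬝ᵥ b) / (σ₂ * Real.sqrt (l ⬝ᵥ S.mulVec l))

/-- `AUC(t)` of a linear combination with correlation `r`, by formula (2) of the paper:
`E[Φ(r(Z₁−Z₂)/(σ₂√(2(1−r²)))) | Z₁ > t, Z₂ ≤ t]` with `Z₁,Z₂` i.i.d. `N(μ₂,σ₂²)`. -/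
noncomputable def aucOfRho (μ₂ σ₂ : ℝ) (t r : ℝ) : ℝ :=
  let ν := (gaussianReal μ₂ (Real.toNNReal (σ₂ ^ 2))).prod
    (gaussianReal μ₂ (Real.toNNReal (σ₂ ^ 2)))
  (∫ q in {q : ℝ × ℝ | q.1 > t ∧ q.2 ≤ t},
      stdNormalCDF (r * (q.1 - q.2) / (σ₂ * Real.sqrt (2 * (1 - r ^ 2)))) ∂ν) /
    (ν {q : ℝ × ℝ | q.1 > t ∧ q.2 ≤ t}).toReal

/-- `AUC_I(l) = ∫ AUC(t, ρ(l)) f_c(t) dt` for the linear combination `Y = lᵀX̃` under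
the joint multivariate normal model. -/
noncomputable def aucILin {p : ℕ} (S : Matrix (Fin p) (Fin p) ℝ) (b : Fin p → ℝ)
    (μ₂ σ₂ : ℝ) (f : ℝ → ℝ) (l : Fin p → ℝ) : ℝ :=
  ∫ t, aucOfRho μ₂ σ₂ t (rhoLin S b σ₂ l) * f t

/-!
On the event `{Z₁ > t ≥ Z₂}` the integrand of `AUC(t, r)` is `Φ(κ · r / √(1 - r²))` with
`κ = (Z₁ - Z₂)/(σ₂√2) ≥ 0`, and `r / √(1 - r²) = tan (arcsin r)` is increasing on `(-1, 1)`.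
So `AUC(t, ·)` is nondecreasing there, and so is `AUC_I` after integrating against `f_c ≥ 0`.
Cauchy–Schwarz for the inner product `⟨x, y⟩ = xᵀΣy` gives
`|ρ(l)| ≤ √(bᵀΣ⁻¹b)/σ₂ = ρ(Σ⁻¹b) < 1`, so every correlation lies in `(-1, 1)` and the
largest one is attained at `l_opt = Σ⁻¹b`.
-/

lemma stdNormalCDF_eq_cdf : stdNormalCDF = cdf (gaussianReal 0 1) :=
  funext fun x => (cdf_eq_real _ x).symm

lemma stdNormalCDF_mono : Monotone stdNormalCDF :=
  stdNormalCDF_eq_cdf ▸ (cdf _).mono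

lemma norm_stdNormalCDF_le_one (x : ℝ) : ‖stdNormalCDF x‖ ≤ 1 := by
  rw [stdNormalCDF_eq_cdf, Real.norm_of_nonneg (cdf_nonneg _ x)]
  exact cdf_le_one _ x

lemma integrable_stdNormalCDF_comp {α : Type*} [MeasurableSpace α] {μ : Measure α}
    [IsFiniteMeasure μ] {h : α → ℝ} (hh : Measurable h) :
    Integrable (fun x => stdNormalCDF (h x)) μ :=
  .of_bound (stdNormalCDF_mono.measurable.comp hh).aestronglyMeasurable 1
    (ae_of_all _ fun x => norm_stdNormalCDF_le_one (h x))

lemma monotoneOn_div_sqrt_one_sub_sq :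
    MonotoneOn (fun r : ℝ => r / √(1 - r ^ 2)) (Ioo (-1) 1) := by
  intro r₁ hr₁ r₂ hr₂ hle
  simp only [← Real.tan_arcsin]
  have mem {r : ℝ} (hr : r ∈ Ioo (-1) 1) : Real.arcsin r ∈ Ioo (-(Real.pi / 2)) (Real.pi / 2) :=
    ⟨Real.neg_pi_div_two_lt_arcsin.2 hr.1, Real.arcsin_lt_pi_div_two.2 hr.2⟩
  exact Real.strictMonoOn_tan.monotoneOn (mem hr₁) (mem hr₂) (Real.arcsin_le_arcsin hle)

lemma stronglyMeasurable_setIntegral_prodMk_preimage {α β E : Type*} [MeasurableSpace α]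
    [MeasurableSpace β] [NormedAddCommGroup E] [NormedSpace ℝ E] {ν : Measure β} [SFinite ν]
    {s : Set (α × β)} (hs : MeasurableSet s) {g : β → E} (hg : StronglyMeasurable g) :
    StronglyMeasurable fun a => ∫ b in Prod.mk a ⁻¹' s, g b ∂ν := by
  have hind : StronglyMeasurable (s.indicator fun x => g x.2) :=
    (hg.comp_measurable measurable_snd).indicator hs
  simp_rw [← integral_indicator (measurable_prodMk_left hs)]
  exact hind.integral_prod_right'

namespace Matrix

theorem mulVec_nonsing_inv_mulVec {n R : Type*} [Fintype n] [DecidableEq n] [CommRing R]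
    {A : Matrix n n R} (hA : IsUnit A.det) (v : n → R) : A *ᵥ (A⁻¹ *ᵥ v) = v := by
  rw [mulVec_mulVec, mul_nonsing_inv _ hA, one_mulVec]

theorem PosSemidef.dotProduct_mulVec_sq_le {n : Type*} [Fintype n] {M : Matrix n n ℝ}
    (hM : M.PosSemidef) (x y : n → ℝ) :
    (x ⬝ᵥ M *ᵥ y) ^ 2 ≤ (x ⬝ᵥ M *ᵥ x) * (y ⬝ᵥ M *ᵥ y) := by
  let _ := M.toSeminormedAddCommGroup hM
  let _ := M.toInnerProductSpace hM
  have h := real_inner_mul_inner_self_le x y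
  change (M *ᵥ y ⬝ᵥ star x) * (M *ᵥ y ⬝ᵥ star x) ≤ (M *ᵥ x ⬝ᵥ star x) * (M *ᵥ y ⬝ᵥ star y) at h
  simpa only [star_trivial, dotProduct_comm (M *ᵥ _), sq] using h

end Matrix

section Correlation

variable {p : ℕ} {S : Matrix (Fin p) (Fin p) ℝ} (b : Fin p → ℝ)

lemma rhoLin_inv_mulVec (σ₂ : ℝ) (hS : IsUnit S.det) :
    rhoLin S b σ₂ (S⁻¹ *ᵥ b) = √(b ⬝ᵥ S⁻¹ *ᵥ b) / σ₂ := by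
  rw [rhoLin, mulVec_nonsing_inv_mulVec hS, dotProduct_comm _ b, mul_comm,
    ← div_div, Real.div_sqrt]

lemma abs_rhoLin_le (hS : S.PosDef) {σ₂ : ℝ} (hσ : 0 < σ₂) (l : Fin p → ℝ) :
    |rhoLin S b σ₂ l| ≤ √(b ⬝ᵥ S⁻¹ *ᵥ b) / σ₂ := by
  have hSw := mulVec_nonsing_inv_mulVec (S.isUnit_iff_isUnit_det.mp hS.isUnit) b
  have hCS : (l ⬝ᵥ b) ^ 2 ≤ (l ⬝ᵥ S *ᵥ l) * (b ⬝ᵥ S⁻¹ *ᵥ b) := by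
    simpa only [hSw, dotProduct_comm _ b] using hS.posSemidef.dotProduct_mulVec_sq_le l (S⁻¹ *ᵥ b)
  have hnum : |l ⬝ᵥ b| ≤ √(l ⬝ᵥ S *ᵥ l) * √(b ⬝ᵥ S⁻¹ *ᵥ b) := by
    rw [← Real.sqrt_mul (by simpa using hS.posSemidef.dotProduct_mulVec_nonneg l)]
    exact Real.abs_le_sqrt hCS
  rw [rhoLin, abs_div, abs_mul, abs_of_pos hσ, abs_of_nonneg (Real.sqrt_nonneg _), mul_comm,
    ← div_div]
  exact div_le_div_of_nonneg_right (div_le_of_le_mul₀ (Real.sqrt_nonneg _) (Real.sqrt_nonneg _)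
    (hnum.trans_eq (mul_comm _ _))) hσ.le

lemma rhoLin_mem_Ioo (hS : S.PosDef) {σ₂ : ℝ} (hσ : 0 < σ₂) (hsub : b ⬝ᵥ S⁻¹ *ᵥ b < σ₂ ^ 2)
    (l : Fin p → ℝ) : rhoLin S b σ₂ l ∈ Ioo (-1) 1 := by
  have hlt : √(b ⬝ᵥ S⁻¹ *ᵥ b) / σ₂ < 1 := (div_lt_one hσ).2 ((Real.sqrt_lt' hσ).2 hsub)
  exact abs_lt.1 ((abs_rhoLin_le b hS hσ l).trans_lt hlt)

end Correlation

section AUC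

variable (μ₂ : ℝ)

lemma aucOfRho_monotoneOn {σ₂ : ℝ} (hσ : 0 < σ₂) (t : ℝ) :
    MonotoneOn (aucOfRho μ₂ σ₂ t) (Ioo (-1) 1) := by
  intro r₁ h₁ r₂ h₂ hle
  have hsplit (r : ℝ) (q : ℝ × ℝ) : r * (q.1 - q.2) / (σ₂ * √(2 * (1 - r ^ 2))) =
      (q.1 - q.2) / (σ₂ * √2) * (r / √(1 - r ^ 2)) := by
    rw [Real.sqrt_mul zero_le_two]; ring
  refine div_le_div_of_nonneg_right (setIntegral_mono_on
    (integrable_stdNormalCDF_comp (by fun_prop)).integrableOn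
    (integrable_stdNormalCDF_comp (by fun_prop)).integrableOn
    (measurableSet_Ioi.prod measurableSet_Iic) fun q hq => stdNormalCDF_mono ?_)
    ENNReal.toReal_nonneg
  rw [hsplit, hsplit]
  have hq : 0 ≤ q.1 - q.2 := by linarith [hq.1, hq.2]
  exact mul_le_mul_of_nonneg_left (monotoneOn_div_sqrt_one_sub_sq h₁ h₂ hle) (by positivity)

lemma norm_aucOfRho_le_one (σ₂ t r : ℝ) : ‖aucOfRho μ₂ σ₂ t r‖ ≤ 1 := by
  rw [aucOfRho, norm_div, Real.norm_of_nonneg ENNReal.toReal_nonneg]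
  refine div_le_one_of_le₀ ?_ ENNReal.toReal_nonneg
  simpa [measureReal_def] using norm_setIntegral_le_of_norm_le_const (measure_lt_top _ _)
    fun q _ => norm_stdNormalCDF_le_one _

lemma measurable_aucOfRho (σ₂ r : ℝ) : Measurable fun t => aucOfRho μ₂ σ₂ t r := by
  have hs : MeasurableSet {x : ℝ × (ℝ × ℝ) | x.2.1 > x.1 ∧ x.2.2 ≤ x.1} :=
    (measurableSet_lt measurable_fst (by fun_prop)).inter
      (measurableSet_le (by fun_prop) measurable_fst)
  exact (stronglyMeasurable_setIntegral_prodMk_preimage hs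
    (stdNormalCDF_mono.measurable.comp (by fun_prop)).stronglyMeasurable).measurable.div
    (measurable_measure_prodMk_left hs).ennreal_toReal

end AUC

noncomputable def aucIOfRho (μ₂ σ₂ : ℝ) (f : ℝ → ℝ) (r : ℝ) : ℝ :=
  ∫ t, aucOfRho μ₂ σ₂ t r * f t

lemma aucILin_eq_aucIOfRho {p : ℕ} (S : Matrix (Fin p) (Fin p) ℝ) (b : Fin p → ℝ)
    (μ₂ σ₂ : ℝ) (f : ℝ → ℝ) (l : Fin p → ℝ) :
    aucILin S b μ₂ σ₂ f l = aucIOfRho μ₂ σ₂ f (rhoLin S b σ₂ l) := rfl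

lemma aucIOfRho_monotoneOn (μ₂ : ℝ) {σ₂ : ℝ} (hσ : 0 < σ₂) {f : ℝ → ℝ}
    (hf_nonneg : ∀ t, 0 ≤ f t) (hf_int : Integrable f) :
    MonotoneOn (aucIOfRho μ₂ σ₂ f) (Ioo (-1) 1) := by
  have hint (r : ℝ) : Integrable fun t => aucOfRho μ₂ σ₂ t r * f t :=
    hf_int.bdd_mul (measurable_aucOfRho μ₂ σ₂ r).aestronglyMeasurable
      (ae_of_all _ fun t => norm_aucOfRho_le_one μ₂ σ₂ t r)
  exact fun r₁ h₁ r₂ h₂ hle => integral_mono (hint r₁) (hint r₂) fun t =>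
    mul_le_mul_of_nonneg_right (aucOfRho_monotoneOn μ₂ hσ t h₁ h₂ hle) (hf_nonneg t)

theorem aucILin_maximized_at_optimal_general {p : ℕ}
    (S : Matrix (Fin p) (Fin p) ℝ) (hS : S.PosDef) (b : Fin p → ℝ)
    (μ₂ σ₂ : ℝ) (hσ₂ : 0 < σ₂) (hsub : b ⬝ᵥ S⁻¹.mulVec b < σ₂ ^ 2)
    (f : ℝ → ℝ) (hf_nonneg : ∀ t, 0 ≤ f t) (hf_int : Integrable f) :
    (∀ l₁ l₂ : Fin p → ℝ, l₁ ≠ 0 → l₂ ≠ 0 →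
      rhoLin S b σ₂ l₁ = rhoLin S b σ₂ l₂ →
        aucILin S b μ₂ σ₂ f l₁ = aucILin S b μ₂ σ₂ f l₂) ∧
    (∀ l₁ l₂ : Fin p → ℝ, l₁ ≠ 0 → l₂ ≠ 0 →
      rhoLin S b σ₂ l₁ ≤ rhoLin S b σ₂ l₂ →
        aucILin S b μ₂ σ₂ f l₁ ≤ aucILin S b μ₂ σ₂ f l₂) ∧
    ∀ l : Fin p → ℝ, l ≠ 0 →
      aucILin S b μ₂ σ₂ f l ≤ aucILin S b μ₂ σ₂ f (S⁻¹.mulVec b) := by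
  have hρ := rhoLin_mem_Ioo b hS hσ₂ hsub
  have hmono := aucIOfRho_monotoneOn μ₂ hσ₂ hf_nonneg hf_int
  have hρ_le_opt (l : Fin p → ℝ) : rhoLin S b σ₂ l ≤ rhoLin S b σ₂ (S⁻¹ *ᵥ b) := by
    rw [rhoLin_inv_mulVec b σ₂ (S.isUnit_iff_isUnit_det.mp hS.isUnit)]
    exact (le_abs_self _).trans (abs_rhoLin_le b hS hσ₂ l)
  simp only [aucILin_eq_aucIOfRho]
  exact ⟨fun l₁ l₂ _ _ h => congrArg _ h, fun l₁ l₂ _ _ h => hmono (hρ l₁) (hρ l₂) h,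
    fun l _ => hmono (hρ l) (hρ _) (hρ_le_opt l)⟩

/-- Under the joint multivariate normal model, `AUC_I(l)` depends on `l` only through
`ρ(l)` and is nondecreasing in `ρ(l)`; therefore `l_opt = Σ⁻¹Cov(X̃,Z)` maximizes
`AUC_I(l)` over nonzero `l`. -/
theorem aucILin_maximized_at_optimal {p : ℕ}
    (S : Matrix (Fin p) (Fin p) ℝ) (hS : S.PosDef) (b : Fin p → ℝ) (hb : b ≠ 0)
    (μ₂ σ₂ : ℝ) (hσ₂ : 0 < σ₂) (hsub : b ⬝ᵥ S⁻¹.mulVec b < σ₂ ^ 2)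
    (f : ℝ → ℝ) (hf_nonneg : ∀ t, 0 ≤ f t) (hf_int : Integrable f)
    (hf_one : ∫ t, f t = 1) :
    (∀ l₁ l₂ : Fin p → ℝ, l₁ ≠ 0 → l₂ ≠ 0 →
      rhoLin S b σ₂ l₁ = rhoLin S b σ₂ l₂ →
        aucILin S b μ₂ σ₂ f l₁ = aucILin S b μ₂ σ₂ f l₂) ∧
    (∀ l₁ l₂ : Fin p → ℝ, l₁ ≠ 0 → l₂ ≠ 0 →
      rhoLin S b σ₂ l₁ ≤ rhoLin S b σ₂ l₂ →
        aucILin S b μ₂ σ₂ f l₁ ≤ aucILin S b μ₂ σ₂ f l₂) ∧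
    ∀ l : Fin p → ℝ, l ≠ 0 →
      aucILin S b μ₂ σ₂ f l ≤ aucILin S b μ₂ σ₂ f (S⁻¹.mulVec b) :=
  aucILin_maximized_at_optimal_general S hS b μ₂ σ₂ hσ₂ hsub f hf_nonneg hf_int
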